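/- Let C be a preorder and J a Grothendieck topology on C. The assignment sending a completely prime filter F on the frame Id_J(C) of J-ideals to the set {c ∈ C : (c)↓_J ∈ F} defines a bijection between the completely prime filters on Id_J(C) and the J-prime filters on C. -/
import Mathlib


/-- A `J`-ideal on a preorder `C` equipped with a coverage `J`. -/
def IsJIdeal {C : Type*} [Preorder C] (J : C → Set (Set C)) (I : Set C) : Prop :=
  (∀ a ∈ I, ∀ b, b ≤ a → b ∈ I) ∧
  ∀ c, ∀ S ∈ J c, (∀ d ∈ S, d ∈ I) → c ∈ I

/-- The `J`-closure of a subset: the smallest `J`-ideal containing it. -/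
def JClosure {C : Type*} [Preorder C] (J : C → Set (Set C)) (X : Set C) : Set C :=
  ⋂₀ {I | IsJIdeal J I ∧ X ⊆ I}

/-- A completely prime filter on the frame `Id_J(C)` of `J`-ideals: a collection of
`J`-ideals which is upward closed (among `J`-ideals), contains the top ideal, is
closed under binary meets (intersections), and contains a member of any family of
`J`-ideals whose join (`J`-closure of the union) it contains. -/
def IsCPFOnJIdeals {C : Type*} [Preorder C] (J : C → Set (Set C))
    (F : Set (Set C)) : Prop :=
  (∀ I ∈ F, IsJIdeal J I) ∧
  (∀ I ∈ F, ∀ I', IsJIdeal J I' → I ⊆ I' → I' ∈ F) ∧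
  Set.univ ∈ F ∧
  (∀ I₁ ∈ F, ∀ I₂ ∈ F, I₁ ∩ I₂ ∈ F) ∧
  (∀ K : Set (Set C), (∀ I ∈ K, IsJIdeal J I) →
    JClosure J (⋃₀ K) ∈ F → ∃ I ∈ K, I ∈ F)

/-- A `J`-prime filter on `C`: a nonempty upward-closed downward-directed subset
which meets every `J`-covering family of each of its members. -/
def IsJPrimeFilter {C : Type*} [Preorder C] (J : C → Set (Set C))
    (F : Set C) : Prop :=
  F.Nonempty ∧
  (∀ a ∈ F, ∀ b, a ≤ b → b ∈ F) ∧
  (∀ a ∈ F, ∀ b ∈ F, ∃ c ∈ F, c ≤ a ∧ c ≤ b) ∧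
  (∀ a, ∀ S ∈ J a, a ∈ F → ∃ d ∈ S, d ∈ F)

section Aux

variable {C : Type*} [Preorder C] {J : C → Set (Set C)}

lemma jideal_univ : IsJIdeal J (Set.univ : Set C) :=
  ⟨fun _ _ _ _ => trivial, fun _ _ _ _ => trivial⟩

lemma jideal_inter {I₁ I₂ : Set C} (h₁ : IsJIdeal J I₁) (h₂ : IsJIdeal J I₂) :
    IsJIdeal J (I₁ ∩ I₂) :=
  ⟨fun a ha b hb => ⟨h₁.1 a ha.1 b hb, h₂.1 a ha.2 b hb⟩,
   fun c S hS hall => ⟨h₁.2 c S hS fun d hd => (hall d hd).1,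
     h₂.2 c S hS fun d hd => (hall d hd).2⟩⟩

lemma subset_jclosure (X : Set C) : X ⊆ JClosure J X := by
  intro x hx I hI
  exact hI.2 hx

lemma jclosure_min {X I : Set C} (hI : IsJIdeal J I) (hX : X ⊆ I) :
    JClosure J X ⊆ I := fun x hx => hx I ⟨hI, hX⟩

lemma jclosure_isJIdeal (X : Set C) : IsJIdeal J (JClosure J X) := by
  constructor
  · intro a ha b hb I hI
    exact hI.1.1 a (ha I hI) b hb
  · intro c S hS hall I hI
    exact hI.1.2 c S hS (fun d hd => hall d hd I hI)

lemma mem_jclosure_singleton_of_le {a b : C} (h : a ≤ b) :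
    a ∈ JClosure J {b} :=
  (jclosure_isJIdeal {b}).1 b (subset_jclosure _ rfl) a h

lemma jclosure_singleton_mono {a b : C} (h : a ≤ b) :
    JClosure J {a} ⊆ JClosure J {b} :=
  jclosure_min (jclosure_isJIdeal _) (by
    intro x hx; cases hx; exact mem_jclosure_singleton_of_le h)

/-- The localization lemma: if `D` is a `J`-ideal, `I` is downward closed, and
for each `x ∈ X` every element below `x` lying in `I` is in `D`, then
`JClosure J X ∩ I ⊆ D`. -/
lemma jclosure_inter_subset
    (hstab : ∀ c, ∀ S ∈ J c, ∀ c', c' ≤ c → {d | d ∈ S ∧ d ≤ c'} ∈ J c')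
    {X I D : Set C} (hD : IsJIdeal J D)
    (hI : ∀ a ∈ I, ∀ b, b ≤ a → b ∈ I)
    (h : ∀ x ∈ X, ∀ z, z ≤ x → z ∈ I → z ∈ D) :
    JClosure J X ∩ I ⊆ D := by
  have hE : IsJIdeal J {x | ∀ z, z ≤ x → z ∈ I → z ∈ D} := by
    constructor
    · intro a ha b hb z hz hzI
      exact ha z (hz.trans hb) hzI
    · intro c S hS hall z hz hzI
      refine hD.2 z _ (hstab c S hS z hz) ?_
      rintro d ⟨hdS, hdz⟩
      exact hall d hdS d le_rfl (hI z hzI d hdz)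
  rintro x ⟨hx1, hx2⟩
  exact jclosure_min hE (fun y hy z hz hzI => h y hy z hz hzI) hx1 x le_rfl hx2

/-- If a `J`-prime filter meets `JClosure J Y`, it meets `Y`. -/
lemma prime_meet {G : Set C} (hG : IsJPrimeFilter J G) {Y : Set C} {c : C}
    (hc : c ∈ JClosure J Y) (hcG : c ∈ G) : ∃ d ∈ Y, d ∈ G := by
  have hZ : IsJIdeal J {x | x ∈ G → ∃ d ∈ Y, d ∈ G} := by
    constructor
    · intro a ha b hb hbG
      exact ha (hG.2.1 b hbG a hb)
    · intro c' S hS hall hc'G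
      obtain ⟨d, hdS, hdG⟩ := hG.2.2.2 c' S hS hc'G
      exact hall d hdS hdG
  exact jclosure_min hZ (fun y hy hyG => ⟨y, hy, hyG⟩) hc hcG

/-- Membership in a completely prime filter is determined by principal `J`-ideals. -/
lemma cpf_mem_iff {F : Set (Set C)} (hF : IsCPFOnJIdeals J F) {I : Set C}
    (hI : IsJIdeal J I) : I ∈ F ↔ ∃ c ∈ I, JClosure J {c} ∈ F := by
  constructor
  · intro hIF
    have hK : ∀ I' ∈ (fun c => JClosure J {c}) '' I, IsJIdeal J I' := by
      rintro _ ⟨c, _, rfl⟩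
      exact jclosure_isJIdeal _
    have hsub2 : I ⊆ ⋃₀ ((fun c => JClosure J {c}) '' I) := by
      intro c hc
      exact ⟨JClosure J {c}, ⟨c, hc, rfl⟩, subset_jclosure _ rfl⟩
    have hmem : JClosure J (⋃₀ ((fun c => JClosure J {c}) '' I)) ∈ F :=
      hF.2.1 I hIF _ (jclosure_isJIdeal _) (hsub2.trans (subset_jclosure _))
    obtain ⟨_, ⟨c, hcI, rfl⟩, hmemF⟩ := hF.2.2.2.2 _ hK hmem
    exact ⟨c, hcI, hmemF⟩
  · rintro ⟨c, hcI, hc⟩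
    exact hF.2.1 _ hc I hI (jclosure_min hI (by intro x hx; cases hx; exact hcI))

end Aux

/-- For a preorder `C` with a Grothendieck topology `J`, the assignment sending a
completely prime filter `F` on `Id_J(C)` to `{c | (c)↓_J ∈ F}` is a bijection from
the completely prime filters on `Id_J(C)` to the `J`-prime filters on `C`. -/
theorem statement_7 {C : Type*} [Preorder C] (J : C → Set (Set C))
    (hsub : ∀ c, ∀ S ∈ J c, ∀ d ∈ S, d ≤ c)
    (hstab : ∀ c, ∀ S ∈ J c, ∀ c', c' ≤ c → {d | d ∈ S ∧ d ≤ c'} ∈ J c')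
    (hmax : ∀ c : C, {d | d ≤ c} ∈ J c)
    (htrans : ∀ c : C, ∀ S ⊆ {d | d ≤ c}, ∀ T ∈ J c,
      (∀ c' ∈ T, {d | d ∈ S ∧ d ≤ c'} ∈ J c') → S ∈ J c) :
    Set.BijOn (fun F : Set (Set C) => {c : C | JClosure J {c} ∈ F})
      {F | IsCPFOnJIdeals J F} {G | IsJPrimeFilter J G} := by
  refine ⟨?_, ?_, ?_⟩
  · -- MapsTo
    intro F hF
    simp only [Set.mem_setOf_eq] at hF ⊢
    refine ⟨?_, ?_, ?_, ?_⟩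
    · -- nonempty
      obtain ⟨c, _, hc⟩ := (cpf_mem_iff hF jideal_univ).mp hF.2.2.1
      exact ⟨c, hc⟩
    · -- upward closed
      intro a ha b hab
      exact hF.2.1 _ ha _ (jclosure_isJIdeal _) (jclosure_singleton_mono hab)
    · -- directed
      intro a ha b hb
      set D := JClosure J {c | c ≤ a ∧ c ≤ b} with hD
      have hDideal : IsJIdeal J D := jclosure_isJIdeal _
      have h1 : JClosure J {a} ∩ {z | z ≤ b} ⊆ D := by
        refine jclosure_inter_subset hstab hDideal
          (fun x hx y hy => le_trans hy hx) ?_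
        intro x hx z hza hzb
        cases hx
        exact subset_jclosure _ ⟨hza, hzb⟩
      have h2 : JClosure J {b} ∩ JClosure J {a} ⊆ D := by
        refine jclosure_inter_subset hstab hDideal (jclosure_isJIdeal {a}).1 ?_
        intro x hx z hzb hza
        cases hx
        exact h1 ⟨hza, hzb⟩
      set K := (fun c => JClosure J {c}) '' {c | c ≤ a ∧ c ≤ b} with hK
      have hKideal : ∀ I ∈ K, IsJIdeal J I := by
        rintro _ ⟨c, _, rfl⟩
        exact jclosure_isJIdeal _
      have hDsub : D ⊆ JClosure J (⋃₀ K) := by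
        refine jclosure_min (jclosure_isJIdeal _) ?_
        intro c hc
        exact subset_jclosure _ ⟨JClosure J {c}, ⟨c, hc, rfl⟩, subset_jclosure _ rfl⟩
      have hmeet : JClosure J {a} ∩ JClosure J {b} ∈ F := hF.2.2.2.1 _ ha _ hb
      have hJK : JClosure J (⋃₀ K) ∈ F := by
        refine hF.2.1 _ hmeet _ (jclosure_isJIdeal _) ?_
        intro x hx
        exact hDsub (h2 ⟨hx.2, hx.1⟩)
      obtain ⟨_, ⟨c, ⟨hca, hcb⟩, rfl⟩, hcF⟩ := hF.2.2.2.2 _ hKideal hJK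
      exact ⟨c, hcF, hca, hcb⟩
    · -- covers
      intro a S hS ha
      set K := (fun d => JClosure J {d}) '' S with hK
      have hKideal : ∀ I ∈ K, IsJIdeal J I := by
        rintro _ ⟨d, _, rfl⟩
        exact jclosure_isJIdeal _
      have haK : a ∈ JClosure J (⋃₀ K) := by
        refine (jclosure_isJIdeal _).2 a S hS ?_
        intro d hd
        exact subset_jclosure _ ⟨JClosure J {d}, ⟨d, hd, rfl⟩, subset_jclosure _ rfl⟩
      have hJK : JClosure J (⋃₀ K) ∈ F := by
        refine hF.2.1 _ ha _ (jclosure_isJIdeal _) ?_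
        exact jclosure_min (jclosure_isJIdeal _) (by intro x hx; cases hx; exact haK)
      obtain ⟨_, ⟨d, hdS, rfl⟩, hdF⟩ := hF.2.2.2.2 _ hKideal hJK
      exact ⟨d, hdS, hdF⟩
  · -- InjOn
    intro F₁ hF₁ F₂ hF₂ heq
    simp only [Set.mem_setOf_eq] at hF₁ hF₂
    have hG : ∀ c : C, JClosure J {c} ∈ F₁ ↔ JClosure J {c} ∈ F₂ := by
      intro c
      have h1 : c ∈ {c : C | JClosure J {c} ∈ F₁} ↔ c ∈ {c : C | JClosure J {c} ∈ F₂} := by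
        simp only [show {c : C | JClosure J {c} ∈ F₁} = {c : C | JClosure J {c} ∈ F₂} from heq]
      exact h1
    ext I
    constructor
    · intro hI
      obtain ⟨c, hcI, hc⟩ := (cpf_mem_iff hF₁ (hF₁.1 I hI)).mp hI
      exact (cpf_mem_iff hF₂ (hF₁.1 I hI)).mpr ⟨c, hcI, (hG c).mp hc⟩
    · intro hI
      obtain ⟨c, hcI, hc⟩ := (cpf_mem_iff hF₂ (hF₂.1 I hI)).mp hI
      exact (cpf_mem_iff hF₁ (hF₂.1 I hI)).mpr ⟨c, hcI, (hG c).mpr hc⟩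
  · -- SurjOn
    intro G hG
    simp only [Set.mem_setOf_eq] at hG
    set F := {I : Set C | IsJIdeal J I ∧ ∃ c ∈ G, c ∈ I} with hFdef
    have hFcpf : IsCPFOnJIdeals J F := by
      refine ⟨fun I hI => hI.1, ?_, ?_, ?_, ?_⟩
      · rintro I ⟨hIid, c, hcG, hcI⟩ I' hI' hsub'
        exact ⟨hI', c, hcG, hsub' hcI⟩
      · obtain ⟨c, hc⟩ := hG.1
        exact ⟨jideal_univ, c, hc, trivial⟩
      · rintro I₁ ⟨h₁, c₁, hc₁G, hc₁⟩ I₂ ⟨h₂, c₂, hc₂G, hc₂⟩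
        obtain ⟨c, hcG, hca, hcb⟩ := hG.2.2.1 c₁ hc₁G c₂ hc₂G
        exact ⟨jideal_inter h₁ h₂, c, hcG, h₁.1 c₁ hc₁ c hca, h₂.1 c₂ hc₂ c hcb⟩
      · rintro K hK ⟨_, c, hcG, hc⟩
        obtain ⟨d, hd, hdG⟩ := prime_meet hG hc hcG
        obtain ⟨I, hIK, hdI⟩ := hd
        exact ⟨I, hIK, hK I hIK, d, hdG, hdI⟩
    refine ⟨F, hFcpf, ?_⟩
    ext c
    simp only [Set.mem_setOf_eq]
    constructor
    · rintro ⟨_, d, hdG, hd⟩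
      obtain ⟨e, he, heG⟩ := prime_meet hG hd hdG
      cases he
      exact heG
    · intro hc
      exact ⟨jclosure_isJIdeal _, c, hc, subset_jclosure _ rfl⟩
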